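/- Let G be a totally disconnected locally compact group, K a compact open subgroup, and V a topologically irreducible unitary representation of G. Then V^K is either zero or a topologically irreducible unitary representation of the Hecke algebra H(G,K); that is, for every nonzero v ∈ V^K, the subspace H(G,K)·v is dense in V^K. -/

import Mathlib

open MeasureTheory
open scoped Pointwise

/-- `f : G → ℂ` belongs to the relative Hecke algebra `H(G,K)`: it is compactly
supported and bi-`K`-invariant. -/
def IsHeckeFunction {G : Type*} [Group G] [TopologicalSpace G]
    (K : Subgroup G) (f : G → ℂ) : Prop :=
  HasCompactSupport f ∧ ∀ k ∈ K, ∀ g : G, f (k * g) = f g ∧ f (g * k) = f g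

section Aux

variable {G : Type*} [Group G] [TopologicalSpace G] [IsTopologicalGroup G]

/-- A set invariant under right multiplication by an open subgroup is open. -/
lemma rightInvariant_isOpen {K : Subgroup G} (hKopen : IsOpen (K : Set G)) {s : Set G}
    (hs : ∀ x ∈ s, ∀ k ∈ K, x * k ∈ s) : IsOpen s := by
  rw [isOpen_iff_mem_nhds]
  intro x hx
  refine Filter.mem_of_superset ((hKopen.smul x).mem_nhds ?_) ?_
  · exact ⟨1, K.one_mem, by simp [smul_eq_mul]⟩
  · rintro y ⟨k, hk, rfl⟩
    exact hs x hx k hk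

/-- A set invariant under right multiplication by an open subgroup is closed. -/
lemma rightInvariant_isClosed {K : Subgroup G} (hKopen : IsOpen (K : Set G)) {s : Set G}
    (hs : ∀ x ∈ s, ∀ k ∈ K, x * k ∈ s) : IsClosed s := by
  rw [← isOpen_compl_iff]
  refine rightInvariant_isOpen hKopen ?_
  intro x hx k hk hmem
  exact hx (by simpa using hs _ hmem k⁻¹ (K.inv_mem hk))

/-- A function invariant under right multiplication by an open subgroup is continuous. -/
lemma rightInvariant_continuous {K : Subgroup G} (hKopen : IsOpen (K : Set G))
    {α : Type*} [TopologicalSpace α] {f : G → α}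
    (hf : ∀ (x : G), ∀ k ∈ K, f (x * k) = f x) : Continuous f := by
  have h : IsLocallyConstant f := by
    intro t
    refine rightInvariant_isOpen hKopen ?_
    intro x hx k hk
    simpa only [Set.mem_preimage, hf x k hk] using hx
  exact h.continuous

end Aux

set_option maxHeartbeats 1600000 in
/-- Let `G` be a totally disconnected locally compact group, `K` a compact open subgroup,
and `V` a topologically irreducible unitary representation of `G`.  Then `V^K` is zero or
a topologically irreducible unitary representation of the Hecke algebra `H(G,K)`: for
every nonzero `v ∈ V^K`, the orbit `H(G,K) · v` (where `f · v = ∫_G f(g) · (g • v) dμ`)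
is dense in `V^K`. -/
theorem hecke_fixedVectors_topologically_irreducible
    {G : Type*} [Group G] [TopologicalSpace G] [IsTopologicalGroup G]
    [LocallyCompactSpace G] [TotallyDisconnectedSpace G]
    [MeasurableSpace G] [BorelSpace G]
    (μ : Measure G) [μ.IsHaarMeasure] [μ.IsMulLeftInvariant]
    (K : Subgroup G) (hKopen : IsOpen (K : Set G)) (hKcomp : IsCompact (K : Set G))
    (V : Type*) [NormedAddCommGroup V] [InnerProductSpace ℂ V] [CompleteSpace V]
    (π : G →* (V →L[ℂ] V))
    (hunitary : ∀ (g : G) (u w : V), (inner ℂ (π g u) (π g w) : ℂ) = inner ℂ u w)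
    (hcont : Continuous fun p : G × V => π p.1 p.2)
    (hirr : ∀ U : Submodule ℂ V, IsClosed (U : Set V) →
      (∀ g : G, ∀ w ∈ U, π g w ∈ U) → U = ⊥ ∨ U = ⊤) :
    ∀ v : V, (∀ k ∈ K, π k v = v) → v ≠ 0 →
      ∀ u : V, (∀ k ∈ K, π k u = u) →
        u ∈ closure {w : V | ∃ f : G → ℂ, IsHeckeFunction K f ∧
          w = ∫ g : G, f g • π g v ∂μ} := by
  classical
  intro v hv hvne u hu
  -- basic measure facts
  have hKmeas : MeasurableSet (K : Set G) := hKopen.measurableSet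
  have hμKpos : 0 < μ K := hKopen.measure_pos μ ⟨1, K.one_mem⟩
  have hμKfin : μ (K : Set G) < ⊤ := hKcomp.measure_lt_top
  set c : ℝ := (μ (K : Set G)).toReal with hc
  have hcpos : 0 < c := ENNReal.toReal_pos hμKpos.ne' hμKfin.ne
  -- the isometry property
  have normπ : ∀ (g : G) (w : V), ‖π g w‖ = ‖w‖ := by
    intro g w
    have h := hunitary g w w
    have h1 : (RCLike.re (inner ℂ (π g w) (π g w) : ℂ)) = ‖π g w‖ ^ 2 :=
      inner_self_eq_norm_sq _
    have h2 : (RCLike.re (inner ℂ w w : ℂ)) = ‖w‖ ^ 2 := inner_self_eq_norm_sq _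
    rw [h] at h1
    have h3 : ‖π g w‖ ^ 2 = ‖w‖ ^ 2 := by rw [← h1, h2]
    nlinarith [norm_nonneg (π g w), norm_nonneg w]
  -- orbit maps are continuous
  have contOrb : ∀ w : V, Continuous fun x : G => π x w := by
    intro w
    exact hcont.comp (continuous_id.prodMk continuous_const)
  -- every Hecke function is continuous (it is locally constant)
  have heckeCont : ∀ f : G → ℂ, IsHeckeFunction K f → Continuous f := by
    intro f hf
    exact rightInvariant_continuous hKopen (fun x k hk => (hf.2 k hk x).2)
  -- Hecke integrands are integrable
  have heckeInt : ∀ (f : G → ℂ) (w : V), IsHeckeFunction K f →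
      Integrable (fun x => f x • π x w) μ := by
    intro f w hf
    refine Continuous.integrable_of_hasCompactSupport
      ((heckeCont f hf).smul (contOrb w)) ?_
    refine hf.1.mono ?_
    intro x hx
    intro hfx
    exact hx (by simp [hfx])
  -- the Hecke orbit of `v` is a submodule
  set Msub : Submodule ℂ V :=
    { carrier := {w : V | ∃ f : G → ℂ, IsHeckeFunction K f ∧
        w = ∫ g : G, f g • π g v ∂μ}
      zero_mem' := by
        refine ⟨0, ⟨HasCompactSupport.zero, fun k hk g => by simp⟩, by simp⟩
      add_mem' := by
        rintro a b ⟨f₁, hf₁, rfl⟩ ⟨f₂, hf₂, rfl⟩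
        refine ⟨f₁ + f₂, ⟨hf₁.1.add hf₂.1, fun k hk g =>
          ⟨by simp [(hf₁.2 k hk g).1, (hf₂.2 k hk g).1],
           by simp [(hf₁.2 k hk g).2, (hf₂.2 k hk g).2]⟩⟩, ?_⟩
        rw [← integral_add (heckeInt f₁ v hf₁) (heckeInt f₂ v hf₂)]
        congr 1
        funext x
        rw [Pi.add_apply, add_smul]
      smul_mem' := by
        rintro a w ⟨f, hf, rfl⟩
        refine ⟨a • f, ⟨hf.1.mono ?_, fun k hk g =>
          ⟨by simp [(hf.2 k hk g).1], by simp [(hf.2 k hk g).2]⟩⟩, ?_⟩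
        · intro x hx hfx
          exact hx (by simp [hfx])
        · rw [← integral_smul]
          congr 1
          funext x
          rw [Pi.smul_apply, smul_eq_mul, mul_smul] } with hMsub
  -- the indicator function of K
  set IK : G → ℝ := (K : Set G).indicator (fun _ => (1 : ℝ)) with hIK
  have hIKcont : Continuous IK := by
    refine rightInvariant_continuous hKopen ?_
    intro x k hk
    by_cases hx : x ∈ (K : Set G)
    · simp [hIK, Set.indicator_apply, hx, K.mul_mem hx hk]
    · have : x * k ∉ (K : Set G) := by
        intro hmem
        exact hx (by simpa using K.mul_mem hmem (K.inv_mem hk))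
      simp [hIK, Set.indicator_apply, hx, this]
  have hKclosed : IsClosed (K : Set G) := K.isClosed_of_isOpen hKopen
  -- integrability of K-truncated orbit maps
  have intK : ∀ w : V, Integrable (fun x => IK x • π x w) μ := by
    intro w
    refine Continuous.integrable_of_hasCompactSupport
      (hIKcont.smul (contOrb w)) ?_
    refine IsCompact.of_isClosed_subset hKcomp (isClosed_tsupport _) ?_
    refine closure_minimal ?_ hKclosed
    intro x hx
    by_contra hxK
    exact hx (by simp [hIK, Set.indicator_apply, hxK])
  -- the averaging projection
  have hIKval : ∀ x ∈ (K : Set G), IK x = 1 := by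
    intro x hx; simp [hIK, Set.indicator_apply, hx]
  set Plin : V →ₗ[ℂ] V :=
    { toFun := fun w => c⁻¹ • ∫ x, IK x • π x w ∂μ
      map_add' := by
        intro w₁ w₂
        show c⁻¹ • ∫ x, IK x • π x (w₁ + w₂) ∂μ =
          c⁻¹ • ∫ x, IK x • π x w₁ ∂μ + c⁻¹ • ∫ x, IK x • π x w₂ ∂μ
        have : (fun x => IK x • π x (w₁ + w₂)) =
            fun x => IK x • π x w₁ + IK x • π x w₂ := by
          funext x; rw [map_add, smul_add]
        rw [this, integral_add (intK w₁) (intK w₂), smul_add]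
      map_smul' := by
        intro a w
        show c⁻¹ • ∫ x, IK x • π x (a • w) ∂μ =
          RingHom.id ℂ a • (c⁻¹ • ∫ x, IK x • π x w ∂μ)
        have : (fun x => IK x • π x (a • w)) = fun x => a • (IK x • π x w) := by
          funext x; rw [_root_.map_smul, smul_comm]
        rw [this, integral_smul, RingHom.id_apply, smul_comm] } with hPlin
  have hPbound : ∀ w : V, ‖Plin w‖ ≤ 1 * ‖w‖ := by
    intro w
    have h1 : ‖∫ x, IK x • π x w ∂μ‖ ≤ ∫ x, ‖IK x • π x w‖ ∂μ :=
      norm_integral_le_integral_norm _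
    have h2 : (fun x => ‖IK x • π x w‖) = fun x => IK x * ‖w‖ := by
      funext x
      by_cases hx : x ∈ (K : Set G)
      · simp [hIK, Set.indicator_apply, hx, norm_smul, normπ]
      · simp [hIK, Set.indicator_apply, hx]
    have h3 : ∫ x, IK x * ‖w‖ ∂μ = c * ‖w‖ := by
      rw [integral_mul_const]
      congr 1
      have := integral_indicator_const (1 : ℝ) hKmeas (μ := μ)
      simpa [hIK, hc, measureReal_def] using this
    have h4 : ‖Plin w‖ = c⁻¹ * ‖∫ x, IK x • π x w ∂μ‖ := by
      show ‖c⁻¹ • ∫ x, IK x • π x w ∂μ‖ = _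
      rw [norm_smul, Real.norm_eq_abs, abs_of_pos (by positivity)]
    rw [h4, one_mul]
    calc c⁻¹ * ‖∫ x, IK x • π x w ∂μ‖ ≤ c⁻¹ * (c * ‖w‖) := by
          rw [← h3]
          exact mul_le_mul_of_nonneg_left (h2 ▸ h1) (by positivity)
      _ = ‖w‖ := by field_simp
  set P : V →L[ℂ] V := Plin.mkContinuous 1 hPbound with hP
  have hPapply : ∀ w : V, P w = c⁻¹ • ∫ x, IK x • π x w ∂μ := fun w => rfl
  -- P fixes K-fixed vectors
  have hPfix : ∀ w : V, (∀ k ∈ K, π k w = w) → P w = w := by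
    intro w hw
    rw [hPapply]
    have : (fun x => IK x • π x w) = (K : Set G).indicator (fun _ => w) := by
      funext x
      by_cases hx : x ∈ (K : Set G)
      · simp [hIK, Set.indicator_apply, hx, hw x hx]
      · simp [hIK, Set.indicator_apply, hx]
    rw [this, integral_indicator_const w hKmeas, smul_smul, measureReal_def, ← hc,
      inv_mul_cancel₀ hcpos.ne', one_smul]
  -- the span of the G-orbit of v is dense
  set S : Set V := Set.range fun g : G => π g v with hS
  have hspanStable : ∀ (g : G), ∀ w ∈ Submodule.span ℂ S,
      π g w ∈ Submodule.span ℂ S := by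
    intro g w hw
    induction hw using Submodule.span_induction with
    | mem x hx =>
      obtain ⟨h, rfl⟩ := hx
      refine Submodule.subset_span ⟨g * h, ?_⟩
      show π (g * h) v = π g (π h v)
      rw [_root_.map_mul, ContinuousLinearMap.mul_apply]
    | zero => simp
    | add x y hx hy ihx ihy => rw [map_add]; exact Submodule.add_mem _ ihx ihy
    | smul a x hx ih => rw [_root_.map_smul]; exact Submodule.smul_mem _ a ih
  have hW : u ∈ closure ((Submodule.span ℂ S : Submodule ℂ V) : Set V) := by
    set W := (Submodule.span ℂ S).topologicalClosure with hWdef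
    have hWcoe : (W : Set V) = closure ((Submodule.span ℂ S : Submodule ℂ V) : Set V) :=
      Submodule.topologicalClosure_coe _
    have hWclosed : IsClosed (W : Set V) := Submodule.isClosed_topologicalClosure _
    have hWinv : ∀ g : G, ∀ w ∈ W, π g w ∈ W := by
      intro g w hw
      have hw' : w ∈ closure ((Submodule.span ℂ S : Submodule ℂ V) : Set V) := by
        rw [← hWcoe]; exact hw
      have h1 : π g w ∈ π g '' closure ((Submodule.span ℂ S : Submodule ℂ V) : Set V) :=
        ⟨w, hw', rfl⟩
      have h2 := image_closure_subset_closure_image (π g).continuous h1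
      have h3 : π g '' ((Submodule.span ℂ S : Submodule ℂ V) : Set V) ⊆
          ((Submodule.span ℂ S : Submodule ℂ V) : Set V) := by
        rintro _ ⟨y, hy, rfl⟩
        exact hspanStable g y hy
      have h4 := closure_mono h3 h2
      rw [← hWcoe] at h4
      exact h4
    have hvW : v ∈ W := by
      refine Submodule.le_topologicalClosure _ (Submodule.subset_span ⟨1, ?_⟩)
      show π (1 : G) v = v
      rw [map_one, ContinuousLinearMap.one_apply]
    rcases hirr W hWclosed hWinv with h | h
    · exact absurd (by simpa [h, Submodule.mem_bot] using hvW) hvne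
    · rw [← hWcoe]
      exact h ▸ Submodule.mem_top
  -- KEY STEP: P (π g v) lies in the Hecke orbit, for every g
  have hKey : ∀ g : G, P (π g v) ∈ Msub := by
    intro g
    set gK : Set G := g • (K : Set G) with hgK
    set s : Set G := (K : Set G) * gK with hs
    set E : G → Set G := fun x => (K : Set G) ∩ ((x • (K : Set G)) * {g⁻¹}) with hE
    set F : G → ℝ := fun x => (μ (E x)).toReal with hF
    -- membership in E
    have hEmem : ∀ x y : G, y ∈ E x ↔ (y ∈ (K : Set G) ∧ y * g ∈ x • (K : Set G)) := by
      intro x y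
      simp only [hE, Set.mem_inter_iff, and_congr_right_iff]
      intro _
      constructor
      · rintro ⟨w, hw, z, hz, rfl⟩
        rcases Set.mem_singleton_iff.1 hz with rfl
        simpa [mul_assoc] using hw
      · intro hyg
        exact ⟨y * g, hyg, g⁻¹, rfl, by simp [mul_assoc]⟩
    -- right invariance of F
    have hFright : ∀ (x : G), ∀ k ∈ K, F (x * k) = F x := by
      intro x k hk
      have hEeq : E (x * k) = E x := by
        have h1 : (x * k) • (K : Set G) = x • (K : Set G) := by
          rw [mul_smul]
          congr 1
          ext z
          rw [Set.mem_smul_set_iff_inv_smul_mem, smul_eq_mul]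
          exact mul_mem_cancel_left (K.inv_mem hk)
        simp only [hE, h1]
      rw [hF]
      simp only [hEeq]
    -- left invariance of F
    have hFleft : ∀ k ∈ K, ∀ x : G, F (k * x) = F x := by
      intro k hk x
      have hEeq : E (k * x) = k • E x := by
        ext y
        constructor
        · intro hy
          rw [hEmem] at hy
          refine ⟨k⁻¹ * y, ?_, by simp [smul_eq_mul]⟩
          rw [hEmem]
          refine ⟨K.mul_mem (K.inv_mem hk) hy.1, ?_⟩
          have h2 := hy.2
          rw [mul_smul] at h2
          have h3 := Set.mem_smul_set_iff_inv_smul_mem.1 h2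
          simpa [smul_eq_mul, mul_assoc] using h3
        · rintro ⟨z, hz, rfl⟩
          rw [hEmem] at hz ⊢
          refine ⟨by simpa [smul_eq_mul] using K.mul_mem hk hz.1, ?_⟩
          have h2 := Set.smul_mem_smul_set (a := k) hz.2
          rw [← mul_smul] at h2
          simpa [smul_eq_mul, mul_assoc] using h2
      have hμeq : μ (k • E x) = μ (E x) := by
        have : k • E x = (fun h => k⁻¹ * h) ⁻¹' (E x) := by
          ext z
          rw [Set.mem_smul_set_iff_inv_smul_mem, smul_eq_mul, Set.mem_preimage]
        rw [this, measure_preimage_mul]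
      rw [hF]
      simp only [hEeq, hμeq]
    -- support of F
    have hFsupp : ∀ x : G, x ∉ s → F x = 0 := by
      intro x hx
      by_contra hFx
      have hμE : μ (E x) ≠ 0 := by
        intro h0
        exact hFx (by simp [hF, h0])
      obtain ⟨y, hy⟩ := nonempty_of_measure_ne_zero hμE
      rw [hEmem] at hy
      obtain ⟨hyK, hyg⟩ := hy
      obtain ⟨k, hk, hkeq⟩ := Set.mem_smul_set.1 hyg
      -- y * g = x * k, so x = y * g * k⁻¹ = y * (g * k⁻¹)
      apply hx
      have hxeq : x = y * (g * k⁻¹) := by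
        rw [smul_eq_mul] at hkeq
        rw [← mul_assoc, ← hkeq, mul_inv_cancel_right]
      rw [hxeq, hs]
      refine Set.mul_mem_mul hyK ?_
      rw [hgK]
      exact ⟨k⁻¹, K.inv_mem hk, by simp [smul_eq_mul]⟩
    have hFcont : Continuous F := rightInvariant_continuous hKopen hFright
    -- properties of s
    have hgKopen : IsOpen gK := hKopen.smul g
    have hgKcomp : IsCompact gK := hKcomp.smul g
    have hsopen : IsOpen s := IsOpen.mul_left hgKopen
    have hscomp : IsCompact s := hKcomp.mul hgKcomp
    have hsinv : ∀ x ∈ s, ∀ k ∈ K, x * k ∈ s := by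
      intro x hx k hk
      obtain ⟨a, ha, w, hw, rfl⟩ := hx
      obtain ⟨b, hb, rfl⟩ := Set.mem_smul_set.1 hw
      have : a * g • b * k = a * (g • (b * k)) := by
        simp [smul_eq_mul, mul_assoc]
      rw [this]
      exact Set.mul_mem_mul ha (Set.smul_mem_smul_set (K.mul_mem hb hk))
    have hsclosed : IsClosed s := rightInvariant_isClosed hKopen hsinv
    -- integrability of the F-weighted orbit
    have hFint : Integrable (fun x => F x • π x v) μ := by
      refine Continuous.integrable_of_hasCompactSupport
        (hFcont.smul (contOrb v)) ?_
      refine IsCompact.of_isClosed_subset hscomp (isClosed_tsupport _) ?_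
      refine closure_minimal ?_ hsclosed
      intro x hx
      by_contra hxs
      exact hx (by simp [hFsupp x hxs])
    -- finite cover of s by left cosets
    have hcover : s ⊆ ⋃ x : G, x • (K : Set G) := by
      intro x _
      exact Set.mem_iUnion.2 ⟨x, 1, K.one_mem, by simp [smul_eq_mul]⟩
    obtain ⟨T₀, hT₀⟩ := hscomp.elim_finite_subcover (fun x : G => x • (K : Set G))
      (fun x => hKopen.smul x) hcover
    set T : Finset (G ⧸ K) := T₀.image (QuotientGroup.mk) with hT
    set C : G ⧸ K → Set G := fun q => QuotientGroup.mk ⁻¹' {q} with hC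
    have hCmem : ∀ (q : G ⧸ K) (x : G), x ∈ C q ↔ (QuotientGroup.mk x : G ⧸ K) = q := by
      intro q x
      simp [hC]
    have hCcoset : ∀ q : G ⧸ K, C q = (Quotient.out q) • (K : Set G) := by
      intro q
      ext x
      rw [hCmem, Set.mem_smul_set_iff_inv_smul_mem, smul_eq_mul, SetLike.mem_coe,
        ← QuotientGroup.eq, QuotientGroup.out_eq']
      exact eq_comm
    have hCopen : ∀ q : G ⧸ K, IsOpen (C q) := by
      intro q
      rw [hCcoset]
      exact hKopen.smul _
    have hCright : ∀ (q : G ⧸ K), ∀ x ∈ C q, ∀ k ∈ K, x * k ∈ C q := by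
      intro q x hx k hk
      rw [hCmem] at hx ⊢
      rw [← hx]
      symm
      rw [QuotientGroup.eq]
      simpa using hk
    have hCdisj : (↑T : Set (G ⧸ K)).Pairwise (Function.onFun Disjoint C) := by
      intro q _ q' _ hne
      refine Set.disjoint_left.2 ?_
      intro x hx hx'
      rw [hCmem] at hx hx'
      exact hne (hx ▸ hx')
    have hμC : ∀ q : G ⧸ K, μ (C q) = μ (K : Set G) := by
      intro q
      rw [hCcoset]
      have : (Quotient.out q) • (K : Set G) =
          (fun h => (Quotient.out q)⁻¹ * h) ⁻¹' (K : Set G) := by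
        ext z
        rw [Set.mem_smul_set_iff_inv_smul_mem, smul_eq_mul, Set.mem_preimage]
      rw [this, measure_preimage_mul]
    have hsU : s ⊆ ⋃ q ∈ T, C q := by
      intro x hx
      obtain ⟨i, hi⟩ := Set.mem_iUnion₂.1 (hT₀ hx)
      obtain ⟨hiT₀, hxi⟩ := hi
      refine Set.mem_iUnion₂.2 ⟨QuotientGroup.mk i, Finset.mem_image_of_mem _ hiT₀, ?_⟩
      rw [hCmem]
      obtain ⟨k, hk, hkeq⟩ := Set.mem_smul_set.1 hxi
      rw [smul_eq_mul] at hkeq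
      have : (QuotientGroup.mk i : G ⧸ K) = QuotientGroup.mk x := by
        rw [QuotientGroup.eq, ← hkeq]
        simpa using hk
      exact this.symm
    -- the fixed-point property on cosets
    have hπcoset : ∀ (a x : G), x ∈ a • (K : Set G) → π x v = π a v := by
      intro a x hx
      obtain ⟨k, hk, hkeq⟩ := Set.mem_smul_set.1 hx
      rw [smul_eq_mul] at hkeq
      rw [← hkeq, map_mul, ContinuousLinearMap.mul_apply, hv k hk]
    -- LHS: the F-weighted integral
    have key1 : ∫ x, F x • π x v ∂μ =
        ∑ q ∈ T, (c * F (Quotient.out q)) • π (Quotient.out q) v := by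
      have e1 : ∫ x, F x • π x v ∂μ = ∫ x in ⋃ q ∈ T, C q, F x • π x v ∂μ := by
        refine (setIntegral_eq_integral_of_forall_compl_eq_zero ?_).symm
        intro x hx
        have hxs : x ∉ s := fun h => hx (hsU h)
        simp [hFsupp x hxs]
      have e2 : ∫ x in ⋃ q ∈ T, C q, F x • π x v ∂μ =
          ∑ q ∈ T, ∫ x in C q, F x • π x v ∂μ :=
        integral_biUnion_finset T (fun q _ => (hCopen q).measurableSet)
          hCdisj (fun q _ => hFint.integrableOn)
      rw [e1, e2]
      refine Finset.sum_congr rfl ?_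
      intro q _
      have e3 : ∫ x in C q, F x • π x v ∂μ =
          ∫ x in C q, F (Quotient.out q) • π (Quotient.out q) v ∂μ := by
        refine setIntegral_congr_fun (hCopen q).measurableSet ?_
        intro x hx
        have hx' : x ∈ (Quotient.out q) • (K : Set G) := by rwa [← hCcoset]
        obtain ⟨k, hk, hkeq⟩ := Set.mem_smul_set.1 hx'
        rw [smul_eq_mul] at hkeq
        have hFeq : F x = F (Quotient.out q) := by
          rw [← hkeq]; exact hFright _ k hk
        show F x • π x v = F (Quotient.out q) • π (Quotient.out q) v
        rw [hFeq, hπcoset _ x hx']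
      rw [e3, setIntegral_const, measureReal_def, hμC, ← hc, smul_smul]
    -- RHS: the averaged integral
    have key2 : ∫ y, IK y • π y (π g v) ∂μ =
        ∑ q ∈ T, F (Quotient.out q) • π (Quotient.out q) v := by
      set D : G ⧸ K → Set G := fun q =>
        (K : Set G) ∩ ((fun y => y * g) ⁻¹' C q) with hD
      have hDmem : ∀ (q : G ⧸ K) (y : G), y ∈ D q ↔
          (y ∈ (K : Set G) ∧ y * g ∈ C q) := by
        intro q y; simp [hD]
      have hDE : ∀ q : G ⧸ K, D q = E (Quotient.out q) := by
        intro q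
        ext y
        rw [hDmem, hEmem, hCcoset]
      have hDmeas : ∀ q : G ⧸ K, MeasurableSet (D q) := by
        intro q
        exact hKmeas.inter (((hCopen q).preimage (continuous_mul_right g)).measurableSet)
      have hDdisj : (↑T : Set (G ⧸ K)).Pairwise (Function.onFun Disjoint D) := by
        intro q hq q' hq' hne
        have := hCdisj hq hq' hne
        refine Set.disjoint_left.2 ?_
        intro y hy hy'
        rw [hDmem] at hy hy'
        exact Set.disjoint_left.1 this hy.2 hy'.2
      have hKU : (K : Set G) = ⋃ q ∈ T, D q := by
        ext y
        constructor
        · intro hy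
          have hyg : y * g ∈ s := by
            refine Set.mul_mem_mul hy ?_
            exact ⟨1, K.one_mem, by simp [smul_eq_mul]⟩
          obtain ⟨q, hq, hyq⟩ := Set.mem_iUnion₂.1 (hsU hyg)
          exact Set.mem_iUnion₂.2 ⟨q, hq, (hDmem q y).2 ⟨hy, hyq⟩⟩
        · intro hy
          obtain ⟨q, _, hyq⟩ := Set.mem_iUnion₂.1 hy
          exact ((hDmem q y).1 hyq).1
      -- integrability on each D q
      have hICq : ∀ q : G ⧸ K, Continuous ((C q).indicator (fun _ => (1 : ℝ))) := by
        intro q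
        refine rightInvariant_continuous hKopen ?_
        intro x k hk
        by_cases hx : x ∈ C q
        · simp [Set.indicator_apply, hx, hCright q x hx k hk]
        · have : x * k ∉ C q := by
            intro hmem
            exact hx (by simpa [mul_assoc] using hCright q _ hmem k⁻¹ (K.inv_mem hk))
          simp [Set.indicator_apply, hx, this]
      have hDint : ∀ q : G ⧸ K, IntegrableOn (fun y => π (y * g) v) (D q) μ := by
        intro q
        rw [← integrable_indicator_iff (hDmeas q)]
        have heq : (D q).indicator (fun y => π (y * g) v) =
            fun y => (IK y * (C q).indicator (fun _ => (1 : ℝ)) (y * g)) • π (y * g) v := by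
          funext y
          by_cases hy : y ∈ (K : Set G) <;> by_cases hyg : y * g ∈ C q <;>
            simp [Set.indicator_apply, hDmem, hy, hyg, hIK]
        rw [heq]
        refine Continuous.integrable_of_hasCompactSupport
          (((hIKcont.mul ((hICq q).comp (continuous_mul_right g)))).smul
            ((contOrb v).comp (continuous_mul_right g))) ?_
        refine IsCompact.of_isClosed_subset hKcomp (isClosed_tsupport _) ?_
        refine closure_minimal ?_ hKclosed
        intro y hy
        by_contra hyK
        exact hy (by simp [hIK, Set.indicator_apply, hyK])
      have e1 : ∫ y, IK y • π y (π g v) ∂μ = ∫ y in (K : Set G), π (y * g) v ∂μ := by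
        have h1 : (fun y => IK y • π y (π g v)) =
            (K : Set G).indicator (fun y => π (y * g) v) := by
          funext y
          by_cases hy : y ∈ (K : Set G)
          · simp only [hIK, Set.indicator_apply, hy, if_true, one_smul, map_mul,
              ContinuousLinearMap.mul_apply]
          · simp [hIK, Set.indicator_apply, hy]
        rw [h1, integral_indicator hKmeas]
      rw [e1, hKU]
      rw [integral_biUnion_finset T (fun q _ => hDmeas q) hDdisj (fun q _ => hDint q)]
      refine Finset.sum_congr rfl ?_
      intro q _
      have e2 : ∫ y in D q, π (y * g) v ∂μ =
          ∫ y in D q, π (Quotient.out q) v ∂μ := by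
        refine setIntegral_congr_fun (hDmeas q) ?_
        intro y hy
        have hyg : y * g ∈ C q := ((hDmem q y).1 hy).2
        have h5 : y * g ∈ (Quotient.out q) • (K : Set G) := by rwa [← hCcoset]
        show π (y * g) v = π (Quotient.out q) v
        exact hπcoset _ _ h5
      rw [e2, setIntegral_const, measureReal_def, hDE, hF]
    -- the Hecke function realizing P (π g v)
    set fg : G → ℂ := fun x => (((c⁻¹ * c⁻¹) * F x : ℝ) : ℂ) with hfg
    have hfgHecke : IsHeckeFunction K fg := by
      constructor
      · refine IsCompact.of_isClosed_subset hscomp (isClosed_tsupport _) ?_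
        refine closure_minimal ?_ hsclosed
        intro x hx
        by_contra hxs
        exact hx (by simp [hfg, hFsupp x hxs])
      · intro k hk x
        constructor
        · simp only [hfg, hFleft k hk x]
        · simp only [hfg, hFright x k hk]
    have hval : ∫ x, fg x • π x v ∂μ = P (π g v) := by
      have l1 : ∫ x, fg x • π x v ∂μ = (c⁻¹ * c⁻¹) • ∫ x, F x • π x v ∂μ := by
        rw [← integral_smul]
        congr 1
        funext x
        rw [hfg, Complex.coe_smul, mul_smul]
      rw [l1, key1, hPapply, key2, Finset.smul_sum, Finset.smul_sum]
      refine Finset.sum_congr rfl ?_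
      intro q _
      rw [smul_smul, smul_smul]
      congr 1
      field_simp
    exact ⟨fg, hfgHecke, hval.symm⟩
  -- assemble
  have hPu : P u = u := hPfix u hu
  have himg : P '' ((Submodule.span ℂ S : Submodule ℂ V) : Set V) ⊆ (Msub : Set V) := by
    rintro _ ⟨w, hw, rfl⟩
    induction hw using Submodule.span_induction with
    | mem x hx =>
      obtain ⟨g, rfl⟩ := hx
      exact hKey g
    | zero => rw [map_zero]; exact Msub.zero_mem
    | add x y hx hy ihx ihy => rw [map_add]; exact Msub.add_mem ihx ihy
    | smul a x hx ih => rw [_root_.map_smul]; exact Msub.smul_mem a ih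
  have hfinal : u ∈ closure (Msub : Set V) := by
    have h1 : P u ∈ P '' closure ((Submodule.span ℂ S : Submodule ℂ V) : Set V) :=
      ⟨u, hW, rfl⟩
    rw [hPu] at h1
    have h2 := image_closure_subset_closure_image P.continuous h1
    exact closure_mono himg h2
  exact hfinal
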